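/- arXiv:2302.09680 — 3 statements merged into one kernel-verified Lean document; each statement's English description precedes it below -/
import Mathlib

section
/- For the k-th Haar matrix M_k and Φ = (k+1)·M_k, the maximum over i ∈ {1,…,2^k} of the ℓ2-norm of the sum of the first i rows of Φ is at most (k+1)^{3/2}, and the corresponding maximum ℓ1-norm is at most (k+1)^2. -/
/-!
Write `p = log2 c` for a column `c ≠ 0` of `M_k`. Its nonzero entries form a balanced block of
`2^(k-p)` consecutive entries `±2^(p-k)` (positive half first), so a partial sum down the column is
a sum over an initial segment of the block: it has absolute value at most `1/2`, and it vanishes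
unless the last row summed lies inside the block. The blocks of one level partition the rows, so for every
row `i` at most one column per level, plus the constant column, has a nonzero partial sum. The
partial row sum of `M_k` therefore has at most `k + 1` nonzero coordinates, each of absolute value
at most `1`; its `ℓ1`-norm and squared `ℓ2`-norm are at most `k + 1`, and scaling by `k + 1` gives
the bounds.
-/

open Matrix Finset

/-- The `k`-th Haar matrix `M_k` of size `2^k × 2^k`. -/
noncomputable def haarMatrix (k : ℕ) : Matrix (Fin (2 ^ k)) (Fin (2 ^ k)) ℝ :=
  fun i j =>
    if j.val = 0 then 1 / (2 : ℝ) ^ k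
    else
      let p := Nat.log2 j.val
      let q := j.val - 2 ^ p
      let w := 2 ^ (k - p)
      if q * w ≤ i.val ∧ i.val < q * w + w / 2 then (2 : ℝ) ^ p / (2 : ℝ) ^ k
      else if q * w + w / 2 ≤ i.val ∧ i.val < (q + 1) * w then -((2 : ℝ) ^ p / (2 : ℝ) ^ k)
      else 0

def haarStep (a : ℝ) (l h n : ℕ) : ℝ :=
  if l ≤ n ∧ n < l + h then a else if l + h ≤ n ∧ n < l + 2 * h then -a else 0

lemma sum_range_haarStep (a : ℝ) (l h m : ℕ) :
    ∑ n ∈ range m, haarStep a l h n =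
      a * (((min (l + h) m - l : ℕ) : ℝ) - ((min (l + 2 * h) m - (l + h) : ℕ) : ℝ)) := by
  have hstep : ∀ n ∈ range m, haarStep a l h n = a * ((if n ∈ Ico l (min (l + h) m) then 1 else 0) -
      (if n ∈ Ico (l + h) (min (l + 2 * h) m) then 1 else 0)) := by
    intro n hn
    simp only [haarStep, mem_Ico]
    have hnm := mem_range.mp hn
    split_ifs <;> first | (exfalso; omega) | ring
  have hcount : ∀ l' r', r' ≤ m → #{n ∈ range m | n ∈ Ico l' r'} = r' - l' := by
    intro l' r' hr
    rw [← Nat.card_Ico]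
    congr 1
    ext n
    simp only [mem_filter, mem_range, mem_Ico]
    omega
  rw [sum_congr rfl hstep, ← mul_sum, sum_sub_distrib, sum_boole, sum_boole,
    hcount _ _ (min_le_right _ _), hcount _ _ (min_le_right _ _)]

lemma abs_sum_range_haarStep_le {a : ℝ} (ha : 0 ≤ a) (l h m : ℕ) :
    |∑ n ∈ range m, haarStep a l h n| ≤ a * h := by
  rw [sum_range_haarStep, abs_mul, abs_of_nonneg ha]
  gcongr
  apply abs_sub_le_of_nonneg_of_le <;> first | positivity | (norm_cast; omega)

lemma sum_range_haarStep_eq_zero (a : ℝ) {l h m : ℕ} (hm : m ≤ l ∨ l + 2 * h ≤ m) :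
    ∑ n ∈ range m, haarStep a l h n = 0 := by
  have hcounts : min (l + h) m - l = min (l + 2 * h) m - (l + h) := by omega
  rw [sum_range_haarStep, hcounts, sub_self, mul_zero]

lemma sum_filter_le_eq_sum_range {M : Type*} [AddCommMonoid M] {N : ℕ} (g : ℕ → M) (i : Fin N) :
    ∑ j ∈ univ.filter (fun j : Fin N => j ≤ i), g j = ∑ n ∈ range (i + 1), g n := by
  rw [filter_ge_eq_Iic, Nat.range_succ_eq_Iic, ← Fin.map_valEmbedding_Iic, sum_map]
  rfl

lemma haarMatrix_apply_of_ne_zero (k : ℕ) (j c : Fin (2 ^ k)) (hc : c.val ≠ 0) :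
    haarMatrix k j c = haarStep ((2 : ℝ) ^ Nat.log2 c / 2 ^ k)
      ((c - 2 ^ Nat.log2 c) * 2 ^ (k - Nat.log2 c)) (2 ^ (k - Nat.log2 c - 1)) j := by
  have hp : Nat.log2 c < k := (Nat.log2_lt hc).mpr c.isLt
  have hw : 2 ^ (k - Nat.log2 c) = 2 * 2 ^ (k - Nat.log2 c - 1) := by
    rw [← pow_succ']; congr 1; omega
  simp only [haarMatrix, haarStep, if_neg hc, hw, add_one_mul, Nat.mul_div_cancel_left _ two_pos]

noncomputable def haarPartialSum (k : ℕ) (i c : Fin (2 ^ k)) : ℝ :=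
  ∑ j ∈ univ.filter (fun j : Fin (2 ^ k) => j ≤ i), haarMatrix k j c

lemma haarPartialSum_eq_sum_haarStep (k : ℕ) (i c : Fin (2 ^ k)) (hc : c.val ≠ 0) :
    haarPartialSum k i c = ∑ n ∈ range (i + 1), haarStep ((2 : ℝ) ^ Nat.log2 c / 2 ^ k)
      ((c - 2 ^ Nat.log2 c) * 2 ^ (k - Nat.log2 c)) (2 ^ (k - Nat.log2 c - 1)) n := by
  simp only [haarPartialSum, haarMatrix_apply_of_ne_zero k _ c hc]
  exact sum_filter_le_eq_sum_range (haarStep _ _ _) i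

lemma abs_haarPartialSum_le_one (k : ℕ) (i c : Fin (2 ^ k)) : |haarPartialSum k i c| ≤ 1 := by
  by_cases hc : c.val = 0
  · have hconst : haarPartialSum k i c = (i + 1 : ℕ) / 2 ^ k := by
      simp [haarPartialSum, haarMatrix, hc, filter_ge_eq_Iic, div_eq_mul_inv]
    have hi : ((i + 1 : ℕ) : ℝ) ≤ 2 ^ k := by exact_mod_cast i.isLt
    rw [hconst, abs_of_nonneg (by positivity)]
    exact div_le_one_of_le₀ hi (by positivity)
  · have hp : Nat.log2 c < k := (Nat.log2_lt hc).mpr c.isLt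
    have hhalf : (2 : ℝ) ^ Nat.log2 c / 2 ^ k * (2 ^ (k - Nat.log2 c - 1) : ℕ) = 1 / 2 := by
      have : (2 : ℝ) ^ k = 2 ^ Nat.log2 c * 2 ^ (k - Nat.log2 c - 1) * 2 := by
        rw [← pow_add, ← pow_succ]; congr 1; omega
      rw [this]; push_cast; field_simp
    rw [haarPartialSum_eq_sum_haarStep k i c hc]
    refine (abs_sum_range_haarStep_le (by positivity) _ _ _).trans ?_
    rw [hhalf]; norm_num

lemma haarPartialSum_eq_zero (k : ℕ) (i c : Fin (2 ^ k)) (hc : c.val ≠ 0)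
    (hci : c.val ≠ 2 ^ Nat.log2 c + i / 2 ^ (k - Nat.log2 c)) : haarPartialSum k i c = 0 := by
  have hp : Nat.log2 c < k := (Nat.log2_lt hc).mpr c.isLt
  have hw : 2 ^ (k - Nat.log2 c) = 2 * 2 ^ (k - Nat.log2 c - 1) := by
    rw [← pow_succ']; congr 1; omega
  have h2p : 2 ^ Nat.log2 c ≤ (c : ℕ) := Nat.log2_self_le hc
  rw [haarPartialSum_eq_sum_haarStep k i c hc]
  apply sum_range_haarStep_eq_zero
  by_contra! hin
  rw [← hw] at hin
  have hdiv : (i : ℕ) / 2 ^ (k - Nat.log2 c) = c - 2 ^ Nat.log2 c :=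
    Nat.div_eq_of_lt_le (by omega) (by rw [add_one_mul]; omega)
  omega

lemma card_support_haarPartialSum_le (k : ℕ) (i : Fin (2 ^ k)) :
    #{c | haarPartialSum k i c ≠ 0} ≤ k + 1 := by
  set T : Finset (Fin (2 ^ k)) := {c | haarPartialSum k i c ≠ 0}
  let level : Fin (2 ^ k) → ℕ := fun c => if c.val = 0 then 0 else Nat.log2 c + 1
  have hmaps : Set.MapsTo level T (range (k + 1)) := by
    intro c _
    simp only [level, coe_range, Set.mem_Iio]
    split_ifs with hc
    · omega
    · have := (Nat.log2_lt hc).mpr c.isLt; omega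
  have hinj : Set.InjOn level T := by
    intro c hc c' hc' heq
    have hcol (d : Fin (2 ^ k)) (hd : d ∈ T) (hd0 : d.val ≠ 0) :=
      not_imp_comm.mp (haarPartialSum_eq_zero k i d hd0) (mem_filter.mp hd).2
    simp only [level] at heq
    apply Fin.ext
    split_ifs at heq with hc0 hc0' hc0' <;> first | omega | skip
    rw [hcol c hc hc0, hcol c' hc' hc0', show Nat.log2 c = Nat.log2 c' by omega]
  simpa using card_le_card_of_injOn level hmaps hinj

lemma sum_abs_le_card_support {ι : Type*} [Fintype ι] (v : ι → ℝ) (hv : ∀ c, |v c| ≤ 1) :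
    ∑ c, |v c| ≤ #{c | v c ≠ 0} := by
  rw [← sum_filter_of_ne (p := fun c => v c ≠ 0) (fun c _ h => by simpa using h)]
  simpa using sum_le_card_nsmul _ _ 1 (fun c _ => hv c)

lemma sum_sq_le_sum_abs {ι : Type*} [Fintype ι] (v : ι → ℝ) (hv : ∀ c, |v c| ≤ 1) :
    ∑ c, v c ^ 2 ≤ ∑ c, |v c| :=
  sum_le_sum fun c _ => by
    rw [← sq_abs]; exact pow_le_of_le_one (abs_nonneg _) (hv c) two_ne_zero

/-- For `Φ = (k+1) • M_k`, the sum of the first `i` rows of `Φ` has `ℓ2`-norm at most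
`(k+1)^(3/2)` and `ℓ1`-norm at most `(k+1)^2`. -/
theorem haar_partial_row_sums (k : ℕ) (i : Fin (2 ^ k)) :
    Real.sqrt (∑ c : Fin (2 ^ k),
        (∑ j ∈ Finset.univ.filter (fun j : Fin (2 ^ k) => j ≤ i),
          (((k : ℝ) + 1) • haarMatrix k) j c) ^ 2) ≤ ((k : ℝ) + 1) ^ ((3 : ℝ) / 2) ∧
    (∑ c : Fin (2 ^ k),
        |∑ j ∈ Finset.univ.filter (fun j : Fin (2 ^ k) => j ≤ i),
          (((k : ℝ) + 1) • haarMatrix k) j c|) ≤ ((k : ℝ) + 1) ^ 2 := by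
  set S := haarPartialSum k i
  have hsmul : ∀ c, ∑ j ∈ univ.filter (fun j : Fin (2 ^ k) => j ≤ i),
      (((k : ℝ) + 1) • haarMatrix k) j c = (k + 1) * S c := by
    intro c
    simp only [S, haarPartialSum, Matrix.smul_apply, smul_eq_mul, mul_sum]
  have hS := abs_haarPartialSum_le_one k i
  have hℓ1 : ∑ c, |S c| ≤ k + 1 :=
    (sum_abs_le_card_support S hS).trans (by exact_mod_cast card_support_haarPartialSum_le k i)
  have hk : (0 : ℝ) ≤ k + 1 := by positivity
  constructor
  · have hpow : ((k : ℝ) + 1) ^ ((3 : ℝ) / 2) = √(((k : ℝ) + 1) ^ 2 * (k + 1)) := by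
      rw [Real.sqrt_eq_rpow, ← pow_succ, ← Real.rpow_natCast, ← Real.rpow_mul hk]
      norm_num
    simp only [hsmul, mul_pow, ← mul_sum, hpow]
    gcongr
    exact (sum_sq_le_sum_abs S hS).trans hℓ1
  · simp only [hsmul, abs_mul, abs_of_nonneg hk, ← mul_sum, sq]
    gcongr
end

section
/- Let T: P(T) → R^m be an affine query operator with pseudo-inverse T† (satisfying T T† = identity on V = T(P(T))), and let L be a loss function on R^m × R^m dominating the utility loss U, i.e., U(T† v, T† v') ≤ L(v, v') for all v, v' ∈ V, with L satisfying the triangle inequality. Suppose A(D) minimizes μ ↦ L(ν_DP, T μ) over probability measures μ. Then U(μ_D, A(D)) ≤ U(μ_D, T† T μ_D) + 2 L(T μ_D, ν_DP) + U(A(D), T† T A(D)). -/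
open MeasureTheory

section Triangle

variable {α : Type*} {d : α → α → ℝ}

theorem triangle4_of_triangle_of_symm (htri : ∀ x y z, d x z ≤ d x y + d y z)
    (hsymm : ∀ x y, d x y = d y x) (x x' y y' : α) :
    d x y ≤ d x x' + d x' y' + d y y' := by
  have h₁ := htri x x' y
  have h₂ := htri x' y' y
  rw [hsymm y' y] at h₂
  linarith

theorem le_two_mul_of_triangle_of_symm (htri : ∀ x y z, d x z ≤ d x y + d y z)
    (hsymm : ∀ x y, d x y = d y x) {u v w : α} (h : d w v ≤ d w u) :
    d u v ≤ 2 * d u w := by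
  have := htri u w v
  rw [hsymm w u] at h
  linarith

end Triangle

theorem utility_loss_decomposition_general
    {T : Type*} [MeasurableSpace T] {m : ℕ}
    (U : ProbabilityMeasure T → ProbabilityMeasure T → ℝ)
    (hUtri : ∀ μ ν ξ, U μ ξ ≤ U μ ν + U ν ξ)
    (hUsymm : ∀ μ ν, U μ ν = U ν μ)
    (Tq : ProbabilityMeasure T → (Fin m → ℝ))
    (Tdag : (Fin m → ℝ) → ProbabilityMeasure T)
    (L : (Fin m → ℝ) → (Fin m → ℝ) → ℝ)
    (hLtri : ∀ u v w, L u w ≤ L u v + L v w)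
    (hLsymm : ∀ u v, L u v = L v u)
    (hdom : ∀ v ∈ Set.range Tq, ∀ v' ∈ Set.range Tq, U (Tdag v) (Tdag v') ≤ L v v')
    (νDP : Fin m → ℝ)
    (μD AD : ProbabilityMeasure T)
    (hopt : ∀ μ : ProbabilityMeasure T, L νDP (Tq AD) ≤ L νDP (Tq μ)) :
    U μD AD ≤
      U μD (Tdag (Tq μD)) + 2 * L (Tq μD) νDP + U AD (Tdag (Tq AD)) :=
  calc U μD AD
      ≤ U μD (Tdag (Tq μD)) + U (Tdag (Tq μD)) (Tdag (Tq AD)) + U AD (Tdag (Tq AD)) :=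
        triangle4_of_triangle_of_symm hUtri hUsymm _ _ _ _
    _ ≤ U μD (Tdag (Tq μD)) + L (Tq μD) (Tq AD) + U AD (Tdag (Tq AD)) := by
        gcongr; exact hdom _ ⟨μD, rfl⟩ _ ⟨AD, rfl⟩
    _ ≤ U μD (Tdag (Tq μD)) + 2 * L (Tq μD) νDP + U AD (Tdag (Tq AD)) := by
        gcongr; exact le_two_mul_of_triangle_of_symm hLtri hLsymm (hopt μD)

/-- Abstract utility–loss decomposition: if `U` is a pseudometric on probability
measures, `Tq` is a query operator with pseudo-inverse `Tdag` on its range,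
`L` is a (pseudometric) loss on `ℝ^m` dominating `U` on the range of `Tq`,
and `AD` minimizes `μ ↦ L(ν_DP, Tq μ)`, then
`U(μ_D, AD) ≤ U(μ_D, T†T μ_D) + 2 L(Tq μ_D, ν_DP) + U(AD, T†T AD)`. -/
theorem utility_loss_decomposition
    {T : Type*} [MeasurableSpace T] {m : ℕ}
    (U : ProbabilityMeasure T → ProbabilityMeasure T → ℝ)
    (hUtri : ∀ μ ν ξ, U μ ξ ≤ U μ ν + U ν ξ)
    (hUsymm : ∀ μ ν, U μ ν = U ν μ)
    (Tq : ProbabilityMeasure T → (Fin m → ℝ))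
    (Tdag : (Fin m → ℝ) → ProbabilityMeasure T)
    (hinv : ∀ v ∈ Set.range Tq, Tq (Tdag v) = v)
    (L : (Fin m → ℝ) → (Fin m → ℝ) → ℝ)
    (hLtri : ∀ u v w, L u w ≤ L u v + L v w)
    (hLsymm : ∀ u v, L u v = L v u)
    (hdom : ∀ v ∈ Set.range Tq, ∀ v' ∈ Set.range Tq, U (Tdag v) (Tdag v') ≤ L v v')
    (νDP : Fin m → ℝ)
    (μD AD : ProbabilityMeasure T)
    (hopt : ∀ μ : ProbabilityMeasure T, L νDP (Tq AD) ≤ L νDP (Tq μ)) :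
    U μD AD ≤
      U μD (Tdag (Tq μD)) + 2 * L (Tq μD) νDP + U AD (Tdag (Tq AD)) :=
  utility_loss_decomposition_general U hUtri hUsymm Tq Tdag L hLtri hLsymm hdom νDP μD AD hopt
end

section
/- For probability measures ν, ν' on the real line with finite first moments, W_1(ν, ν') = ∫_R |F_ν(x) − F_{ν'}(x)| dx, where F denotes the cumulative distribution function (Vallender's identity). -/
/-!
Every 1-Lipschitz `f` is absolutely continuous, so `f x - f 0 = ∫ t in 0..x, f' t` with
`|f'| ≤ 1`. Writing the indicator of `0 < t ≤ x` (or `x < t ≤ 0`) as `𝟙[t < x] - 𝟙[t < 0]` and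
applying Fubini turns `∫ f dν - ∫ f dν'` into `∫ f'(t) (F_ν'(t) - F_ν(t)) dt`, which is at most
`∫ |F_ν - F_ν'|`. Equality is attained by the primitive of `sign (F_ν' - F_ν)`.
-/

open MeasureTheory

/-- The 1-Wasserstein distance, defined via Kantorovich–Rubinstein duality as the
supremum of `|∫ f dμ − ∫ f dν|` over 1-Lipschitz (integrable) functions `f`. -/
noncomputable def W1 {T : Type*} [MeasurableSpace T] [PseudoMetricSpace T]
    (μ ν : Measure T) : ℝ :=
  sSup {r | ∃ f : T → ℝ, LipschitzWith 1 f ∧ Integrable f μ ∧ Integrable f ν ∧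
    r = |∫ x, f x ∂μ - ∫ x, f x ∂ν|}

open Set ProbabilityTheory
open scoped NNReal

lemma indicator_Iio_sub_indicator_Iio (x y t : ℝ) :
    (Iio x).indicator (1 : ℝ → ℝ) t - (Iio y).indicator 1 t =
      (Ico y x).indicator 1 t - (Ico x y).indicator 1 t := by
  simp only [indicator_apply, mem_Iio, mem_Ico, Pi.one_apply]
  split_ifs <;> grind

lemma abs_indicator_Ico_sub_indicator_Ico_le (x y t : ℝ) :
    |(Ico y x).indicator (1 : ℝ → ℝ) t - (Ico x y).indicator 1 t| ≤ (uIcc y x).indicator 1 t := by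
  classical
  simp only [indicator_apply, mem_Ico, mem_uIcc, Pi.one_apply]
  split_ifs <;> norm_num <;> grind

section BoundedPrimitive

variable {g : ℝ → ℝ}

lemma intervalIntegrable_of_norm_le {C : ℝ} (hg : Measurable g) (hgC : ∀ t, ‖g t‖ ≤ C)
    (a b : ℝ) : IntervalIntegrable g volume a b :=
  intervalIntegrable_const.mono_fun' hg.aestronglyMeasurable (ae_of_all _ hgC)

lemma lipschitzWith_intervalIntegral {C : ℝ≥0} (hg : Measurable g) (hgC : ∀ t, ‖g t‖ ≤ C)
    (a : ℝ) : LipschitzWith C fun x => ∫ t in a..x, g t := by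
  refine LipschitzWith.of_dist_le_mul fun x y => ?_
  rw [dist_eq_norm, dist_eq_norm, intervalIntegral.integral_interval_sub_left
    (intervalIntegrable_of_norm_le hg hgC a x) (intervalIntegrable_of_norm_le hg hgC a y)]
  exact intervalIntegral.norm_integral_le_of_norm_le_const fun t _ => hgC t

end BoundedPrimitive

lemma LipschitzWith.integrable_of_integrable_id {f : ℝ → ℝ} {K : ℝ≥0} (hf : LipschitzWith K f)
    {μ : Measure ℝ} [IsFiniteMeasure μ] (hμ : Integrable (fun x : ℝ => x) μ) : Integrable f μ := by
  refine ((integrable_const ‖f 0‖).add (hμ.norm.const_mul K)).mono'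
    hf.continuous.aestronglyMeasurable (ae_of_all _ fun x => ?_)
  calc ‖f x‖ ≤ ‖f 0‖ + ‖f x - f 0‖ := norm_le_norm_add_norm_sub' _ _
    _ ≤ ‖f 0‖ + K * ‖x‖ := by simpa using hf.norm_sub_le x 0

/-- Subtracting `𝟙[t < 0]` confines the support in `t` to `[[0, x]]`, so that Fubini applies. -/
noncomputable def primitiveKernel (g : ℝ → ℝ) (x t : ℝ) : ℝ :=
  g t * ((Iio x).indicator 1 t - (Iio 0).indicator 1 t)

section PrimitiveKernel

variable {g : ℝ → ℝ}

lemma primitiveKernel_eq (x t : ℝ) :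
    primitiveKernel g x t = (Ico 0 x).indicator g t - (Ico x 0).indicator g t := by
  rw [primitiveKernel, indicator_Iio_sub_indicator_Iio, mul_sub]
  simp [indicator_apply]

lemma integral_primitiveKernel {x : ℝ} (hg : IntervalIntegrable g volume 0 x) :
    ∫ t, primitiveKernel g x t = ∫ t in 0..x, g t := by
  have hg' : IntegrableOn g (uIcc 0 x) := by rwa [intervalIntegrable_iff'] at hg
  simp only [primitiveKernel_eq]
  rw [integral_sub, integral_indicator measurableSet_Ico, integral_indicator measurableSet_Ico,
    integral_Ico_eq_integral_Ioc, integral_Ico_eq_integral_Ioc, intervalIntegral]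
  · exact (hg'.mono_set (Ico_subset_Icc_self.trans Icc_subset_uIcc)).integrable_indicator
      measurableSet_Ico
  · exact (hg'.mono_set (Ico_subset_Icc_self.trans Icc_subset_uIcc')).integrable_indicator
      measurableSet_Ico

lemma integral_primitiveKernel_left (ν : Measure ℝ) [IsProbabilityMeasure ν] (t : ℝ) :
    ∫ x, primitiveKernel g x t ∂ν = g t * (ν.real (Ioi t) - (Iio 0).indicator 1 t) := by
  change ∫ x, g t * ((Ioi t).indicator 1 x - (Iio 0).indicator 1 t) ∂ν = _
  rw [integral_const_mul, integral_sub ((integrable_const 1).indicator measurableSet_Ioi)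
    (integrable_const _), integral_indicator_one measurableSet_Ioi, integral_const, probReal_univ,
    one_smul]

lemma norm_primitiveKernel_le {C : ℝ} (hgC : ∀ t, ‖g t‖ ≤ C) (x t : ℝ) :
    ‖primitiveKernel g x t‖ ≤ C * (uIcc 0 x).indicator 1 t := by
  rw [primitiveKernel, norm_mul, Real.norm_eq_abs, indicator_Iio_sub_indicator_Iio]
  exact mul_le_mul (hgC t) (abs_indicator_Ico_sub_indicator_Ico_le x 0 t) (abs_nonneg _)
    ((norm_nonneg _).trans (hgC t))

lemma measurable_primitiveKernel (hg : Measurable g) :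
    Measurable (Function.uncurry (primitiveKernel g)) := by
  have hlt : Measurable fun p : ℝ × ℝ => (Iio p.1).indicator (1 : ℝ → ℝ) p.2 :=
    measurable_one.indicator (measurableSet_lt measurable_snd measurable_fst)
  exact (hg.comp measurable_snd).mul
    (hlt.sub ((measurable_one.indicator measurableSet_Iio).comp measurable_snd))

lemma integrable_primitiveKernel {ν : Measure ℝ} [IsFiniteMeasure ν] {C : ℝ} (hg : Measurable g)
    (hgC : ∀ t, ‖g t‖ ≤ C) (hν : Integrable (fun x : ℝ => x) ν) :
    Integrable (Function.uncurry (primitiveKernel g)) (ν.prod volume) := by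
  have hmeas := measurable_primitiveKernel hg
  have hbound : ∀ x, Integrable fun t => C * (uIcc 0 x).indicator (1 : ℝ → ℝ) t := fun x =>
    ((integrableOn_const measure_Icc_lt_top.ne).integrable_indicator measurableSet_uIcc).const_mul C
  rw [integrable_prod_iff hmeas.aestronglyMeasurable]
  refine ⟨ae_of_all _ fun x => (hbound x).mono'
    (hmeas.comp measurable_prodMk_left).aestronglyMeasurable
    (ae_of_all _ (norm_primitiveKernel_le hgC x)), ?_⟩
  refine (hν.norm.const_mul C).mono'
    hmeas.norm.aestronglyMeasurable.integral_prod_right' (ae_of_all _ fun x => ?_)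
  rw [Real.norm_of_nonneg (integral_nonneg fun _ => norm_nonneg _)]
  calc ∫ t, ‖primitiveKernel g x t‖ ≤ ∫ t, C * (uIcc 0 x).indicator 1 t :=
        integral_mono_of_nonneg (ae_of_all _ fun _ => norm_nonneg _) (hbound x)
          (ae_of_all _ (norm_primitiveKernel_le hgC x))
    _ = C * ‖x‖ := by
        rw [integral_const_mul, integral_indicator_one measurableSet_uIcc,
          Real.volume_real_interval, sub_zero, Real.norm_eq_abs]

end PrimitiveKernel

section TwoMeasures

variable {ν ν' : Measure ℝ} [IsProbabilityMeasure ν] [IsProbabilityMeasure ν']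

lemma measureReal_Ioi_sub_measureReal_Ioi (t : ℝ) :
    ν.real (Ioi t) - ν'.real (Ioi t) = cdf ν' t - cdf ν t := by
  simp only [← compl_Iic, probReal_compl_eq_one_sub measurableSet_Iic, cdf_eq_real]
  ring

variable {g : ℝ → ℝ} {C : ℝ}

lemma integrable_mul_measureReal_Ioi_sub (hg : Measurable g) (hgC : ∀ t, ‖g t‖ ≤ C)
    (hν : Integrable (fun x : ℝ => x) ν) :
    Integrable fun t => g t * (ν.real (Ioi t) - (Iio 0).indicator 1 t) :=
  (integrable_primitiveKernel hg hgC hν).integral_prod_right.congr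
    (ae_of_all _ (integral_primitiveKernel_left ν))

lemma integral_intervalIntegral_eq_integral_mul (hg : Measurable g) (hgC : ∀ t, ‖g t‖ ≤ C)
    (hν : Integrable (fun x : ℝ => x) ν) :
    ∫ x, (∫ t in 0..x, g t) ∂ν = ∫ t, g t * (ν.real (Ioi t) - (Iio 0).indicator 1 t) := by
  simp_rw [← integral_primitiveKernel (intervalIntegrable_of_norm_le hg hgC 0 _),
    integral_integral_swap (integrable_primitiveKernel hg hgC hν), integral_primitiveKernel_left]

lemma integral_intervalIntegral_sub_integral_intervalIntegral (hg : Measurable g)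
    (hgC : ∀ t, ‖g t‖ ≤ C) (hν : Integrable (fun x : ℝ => x) ν)
    (hν' : Integrable (fun x : ℝ => x) ν') :
    ∫ x, (∫ t in 0..x, g t) ∂ν - ∫ x, (∫ t in 0..x, g t) ∂ν' =
      ∫ t, g t * (cdf ν' t - cdf ν t) := by
  rw [integral_intervalIntegral_eq_integral_mul hg hgC hν,
    integral_intervalIntegral_eq_integral_mul hg hgC hν',
    ← integral_sub (integrable_mul_measureReal_Ioi_sub hg hgC hν)
      (integrable_mul_measureReal_Ioi_sub hg hgC hν')]
  simp_rw [← mul_sub, sub_sub_sub_cancel_right, measureReal_Ioi_sub_measureReal_Ioi]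

lemma integrable_cdf_sub_cdf (hν : Integrable (fun x : ℝ => x) ν)
    (hν' : Integrable (fun x : ℝ => x) ν') : Integrable fun t => cdf ν t - cdf ν' t := by
  refine ((integrable_mul_measureReal_Ioi_sub (g := 1) measurable_one (C := 1) (by simp) hν').sub
    (integrable_mul_measureReal_Ioi_sub (g := 1) measurable_one (C := 1) (by simp) hν)).congr
    (ae_of_all _ fun t => ?_)
  simp only [Pi.sub_apply, Pi.one_apply, one_mul, sub_sub_sub_cancel_right,
    measureReal_Ioi_sub_measureReal_Ioi]

lemma abs_integral_sub_integral_le_of_lipschitzWith (hν : Integrable (fun x : ℝ => x) ν)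
    (hν' : Integrable (fun x : ℝ => x) ν') {f : ℝ → ℝ} {K : ℝ≥0} (hf : LipschitzWith K f) :
    |∫ x, f x ∂ν - ∫ x, f x ∂ν'| ≤ K * ∫ t, |cdf ν t - cdf ν' t| := by
  have hftc : (fun x => f x - f 0) = fun x => ∫ t in 0..x, deriv f t := funext fun x =>
    ((hf.lipschitzOnWith (s := uIcc 0 x)).absolutelyContinuousOnInterval
      |>.integral_deriv_eq_sub).symm
  have hderiv : ∀ t, ‖deriv f t‖ ≤ K := fun t => norm_deriv_le_of_lipschitz hf
  have hcentre : ∫ x, f x ∂ν - ∫ x, f x ∂ν' =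
      ∫ x, (f x - f 0) ∂ν - ∫ x, (f x - f 0) ∂ν' := by
    rw [integral_sub (hf.integrable_of_integrable_id hν) (integrable_const _),
      integral_sub (hf.integrable_of_integrable_id hν') (integrable_const _)]
    simp
  rw [hcentre, hftc, integral_intervalIntegral_sub_integral_intervalIntegral
    (measurable_deriv f) hderiv hν hν', ← integral_const_mul, ← Real.norm_eq_abs]
  refine norm_integral_le_of_norm_le ((integrable_cdf_sub_cdf hν hν').abs.const_mul _)
    (ae_of_all _ fun t => ?_)
  rw [norm_mul, Real.norm_eq_abs, abs_sub_comm]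
  exact mul_le_mul_of_nonneg_right (hderiv t) (abs_nonneg _)

lemma exists_lipschitzWith_integral_sub_integral_eq (hν : Integrable (fun x : ℝ => x) ν)
    (hν' : Integrable (fun x : ℝ => x) ν') :
    ∃ f : ℝ → ℝ, LipschitzWith 1 f ∧ Integrable f ν ∧ Integrable f ν' ∧
      ∫ x, f x ∂ν - ∫ x, f x ∂ν' = ∫ t, |cdf ν t - cdf ν' t| := by
  classical
  set sgn : ℝ → ℝ := fun t => if cdf ν t ≤ cdf ν' t then 1 else -1
  have hsgn : Measurable sgn := Measurable.ite
    (measurableSet_le (monotone_cdf ν).measurable (monotone_cdf ν').measurable)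
    measurable_const measurable_const
  have hsgn1 : ∀ t, ‖sgn t‖ ≤ (1 : ℝ≥0) := fun t => by
    by_cases h : cdf ν t ≤ cdf ν' t <;> simp [sgn, h]
  have hf := lipschitzWith_intervalIntegral hsgn hsgn1 0
  refine ⟨_, hf, hf.integrable_of_integrable_id hν, hf.integrable_of_integrable_id hν', ?_⟩
  rw [integral_intervalIntegral_sub_integral_intervalIntegral hsgn hsgn1 hν hν']
  congr 1 with t
  by_cases h : cdf ν t ≤ cdf ν' t
  · simp [sgn, h, abs_of_nonpos (sub_nonpos.2 h)]
  · simp [sgn, h, abs_of_pos (sub_pos.2 (not_le.1 h))]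

end TwoMeasures

/-- Vallender's identity: for probability measures on `ℝ` with finite first moments,
`W₁(ν, ν') = ∫ |F_ν(x) − F_{ν'}(x)| dx`. -/
theorem W1_eq_integral_abs_cdf_sub (ν ν' : Measure ℝ)
    [IsProbabilityMeasure ν] [IsProbabilityMeasure ν']
    (hν : Integrable (fun x : ℝ => x) ν) (hν' : Integrable (fun x : ℝ => x) ν') :
    W1 ν ν' = ∫ x : ℝ, |(ν (Set.Iic x)).toReal - (ν' (Set.Iic x)).toReal| := by
  simp only [← measureReal_def, ← cdf_eq_real]
  obtain ⟨f, hf, hfν, hfν', hf_eq⟩ := exists_lipschitzWith_integral_sub_integral_eq hν hν'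
  refine IsGreatest.csSup_eq ⟨⟨f, hf, hfν, hfν', ?_⟩, ?_⟩
  · rw [hf_eq, abs_of_nonneg (integral_nonneg fun _ => abs_nonneg _)]
  · rintro r ⟨f, hf, -, -, rfl⟩
    simpa using abs_integral_sub_integral_le_of_lipschitzWith hν hν' hf
end
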